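/- Let (s, g, hval) be an entry popped at time t_pop by dynA* with a dyn-monotonic dynamic heuristic h. If s is not in closed at time t_pop, then g + hval ≤ g^{t_pop}(s) + h^{t_pop}(s), where g^{t_pop}(s) is the g-value stored for s in the parent information at time t_pop and h^{t_pop}(s) is the heuristic value of s under the heuristic information at time t_pop. -/

import Mathlib

open scoped ENNReal Classical

/-! ## Transition systems -/

/-- A labeled transition: (origin, label, target). -/
abbrev Tran (S L : Type) := S × L × S

/-- A transition system with states `S`, labels `L`, a cost function,
a set of labeled transitions, an initial state and a set of goal states. -/
structure TransSys (S L : Type) where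
  cost : L → NNReal
  trans : Set (Tran S L)
  init : S
  goal : Set S

namespace TransSys

variable {S L : Type}

/-- `IsPathFrom ts s π s'`: `π` is a path from `s` to `s'` in `ts`. -/
inductive IsPathFrom (ts : TransSys S L) : S → List (Tran S L) → S → Prop
  | nil (s : S) : IsPathFrom ts s [] s
  | cons {s m e : S} {l : L} {π : List (Tran S L)} :
      (s, l, m) ∈ ts.trans → IsPathFrom ts m π e → IsPathFrom ts s ((s, l, m) :: π) e

/-- The cost of a path: sum of the costs of its labels. -/
def pathCost (ts : TransSys S L) (π : List (Tran S L)) : NNReal :=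
  (π.map fun t => ts.cost t.2.1).sum

/-- A state is reachable if there is a path from the initial state to it. -/
def Reachable (ts : TransSys S L) (s : S) : Prop := ∃ π, ts.IsPathFrom ts.init π s

/-- A solution is a path from the initial state to a goal state. -/
def Solution (ts : TransSys S L) (π : List (Tran S L)) : Prop :=
  ∃ s ∈ ts.goal, ts.IsPathFrom ts.init π s

def Solvable (ts : TransSys S L) : Prop := ∃ π, ts.Solution π

/-- `h*`: minimal cost of a path from `s` to a goal state (`∞` if none exists). -/
noncomputable def hstar (ts : TransSys S L) (s : S) : ℝ≥0∞ :=
  sInf {x : ℝ≥0∞ | ∃ π, ∃ g ∈ ts.goal, ts.IsPathFrom s π g ∧ x = (ts.pathCost π : ℝ≥0∞)}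

/-- `g*`: minimal cost of a path from the initial state to `s` (`∞` if none exists). -/
noncomputable def gstar (ts : TransSys S L) (s : S) : ℝ≥0∞ :=
  sInf {x : ℝ≥0∞ | ∃ π, ts.IsPathFrom ts.init π s ∧ x = (ts.pathCost π : ℝ≥0∞)}

end TransSys

/-! ## Information sources and dynamic heuristics -/

/-- An information source for a transition system (Definition 1). -/
structure InfoSource {S L : Type} (ts : TransSys S L) (I : Type) where
  initInfo : I
  update : I → Tran S L → I
  refine : I → S → I

namespace InfoSource

variable {S L I : Type} {ts : TransSys S L}

/-- `ReachWith σ i K`: information object `i` is obtained from the initial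
information by updates/refinements, where `K` is the set consisting of the
initial state together with all targets of used transitions, every refined state
lies in `K`, and the origin of every used transition lies in `K` (Definition 2). -/
inductive ReachWith (σ : InfoSource ts I) : I → Set S → Prop
  | base : ReachWith σ σ.initInfo {ts.init}
  | update {i : I} {K : Set S} {t : Tran S L} :
      ReachWith σ i K → t ∈ ts.trans → t.1 ∈ K →
      ReachWith σ (σ.update i t) (insert t.2.2 K)
  | refine {i : I} {K : Set S} {s : S} :
      ReachWith σ i K → s ∈ K → ReachWith σ (σ.refine i s) K

/-- An information object is reachable (Definition 2). -/
def ReachableInfo (σ : InfoSource ts I) (i : I) : Prop := ∃ K, σ.ReachWith i K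

end InfoSource

section HeuristicProps

variable {S L I : Type} (ts : TransSys S L) (σ : InfoSource ts I) (h : S → I → ℝ≥0∞)

def DynSafe : Prop := ∀ (s : S) (i : I), σ.ReachableInfo i → h s i = ⊤ → ts.hstar s = ⊤

def DynAdmissible : Prop := ∀ (s : S) (i : I), σ.ReachableInfo i → h s i ≤ ts.hstar s

def DynConsistent : Prop :=
  ∀ t ∈ ts.trans, ∀ i : I, σ.ReachableInfo i →
    h t.1 i ≤ (ts.cost t.2.1 : ℝ≥0∞) + h t.2.2 i

def DynGoalAware : Prop := ∀ s ∈ ts.goal, ∀ i : I, σ.ReachableInfo i → h s i = 0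

def DynMonotonic : Prop :=
  ∀ i : I, σ.ReachableInfo i →
    (∀ s : S, ∀ t ∈ ts.trans, h s i ≤ h s (σ.update i t)) ∧
    (∀ s s' : S, h s i ≤ h s (σ.refine i s'))

end HeuristicProps

/-! ## Progression sources -/

/-- A progression source (Definition 5). -/
structure ProgSource {S L : Type} (ts : TransSys S L) (J : Type) where
  initJ : J
  progress : J → Tran S L → J
  merge : J → J → J

/-- The progression-based information source built on a progression source
(Definition 7): per-state information, updated by progressing along a
transition and merging with existing information at the target. -/
noncomputable def progInfoSource {S L J : Type} (ts : TransSys S L) (p : ProgSource ts J) :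
    InfoSource ts (S → Option J) where
  initInfo := fun x => if x = ts.init then some p.initJ else none
  update := fun i t => fun x =>
    if x = t.2.2 then
      match i t.1 with
      | none => i t.2.2
      | some j =>
        match i t.2.2 with
        | none => some (p.progress j t)
        | some j' => some (p.merge (p.progress j t) j')
    else i x
  refine := fun i _ => i

/-- The parent source (Definition 6): per-state `g`-values and parent pointers. -/
noncomputable def parentSource {S L : Type} (ts : TransSys S L) :
    ProgSource ts (NNReal × Option (Tran S L)) where
  initJ := (0, none)
  progress := fun j t => (j.1 + ts.cost t.2.1, some t)
  merge := fun a b => if a.1 ≤ b.1 then a else b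

/-- `ParentChain par s π`: `π` is the sequence of transitions obtained by
following parent pointers backwards from `s` until a state whose stored
pointer is `⊥` (read forwards). -/
inductive ParentChain {S L : Type} (par : S → Option (NNReal × Option (Tran S L))) :
    S → List (Tran S L) → Prop
  | nil {s : S} {g : NNReal} : par s = some (g, none) → ParentChain par s []
  | cons {g : NNReal} {t : Tran S L} {π : List (Tran S L)} :
      par t.2.2 = some (g, some t) → ParentChain par t.1 π →
      ParentChain par t.2.2 (π ++ [t])

/-! ## The dynamic heuristic search framework (Algorithm 1) -/

/-- A configuration of the framework: the known states and one information
object per information source. -/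
structure FConfig (S : Type) {ι : Type} (I : ι → Type) where
  known : Set S
  infos : ∀ k, I k

/-- The (non-terminating) operations of the framework. -/
inductive FOp where
  | genUnknown
  | genKnown
  | refineOp
deriving DecidableEq

section Framework

variable {S L ι : Type} {I : ι → Type} (ts : TransSys S L) (σ : ∀ k, InfoSource ts (I k))

/-- One step of the framework, labeled by the operation performed. -/
inductive FStep : FConfig S I → FOp → FConfig S I → Prop
  | genUnknown {c : FConfig S I} {t : Tran S L} :
      t ∈ ts.trans → t.1 ∈ c.known → t.2.2 ∉ c.known →
      FStep c .genUnknown ⟨insert t.2.2 c.known, fun k => (σ k).update (c.infos k) t⟩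
  | genKnown {c : FConfig S I} {t : Tran S L} :
      t ∈ ts.trans → t.1 ∈ c.known → t.2.2 ∈ c.known →
      FStep c .genKnown ⟨c.known, fun k => (σ k).update (c.infos k) t⟩
  | refineStep {c : FConfig S I} {s : S} :
      s ∈ c.known →
      FStep c .refineOp ⟨c.known, fun k => (σ k).refine (c.infos k) s⟩

/-- The initial configuration of the framework. -/
def initFConfig : FConfig S I := ⟨{ts.init}, fun k => (σ k).initInfo⟩

/-- A configuration occurring in some finite execution of the framework. -/
def FReach (c : FConfig S I) : Prop :=
  Relation.ReflTransGen (fun a b => ∃ op, FStep ts σ a op b) (initFConfig ts σ) c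

/-- Applicability of the gen-unknown operation. -/
def GenUnknownApp (c : FConfig S I) : Prop :=
  ∃ t ∈ ts.trans, t.1 ∈ c.known ∧ t.2.2 ∉ c.known

/-- Applicability of decl-solvable: a goal state is known. -/
def DeclSolvableApp (c : FConfig S I) : Prop := ∃ s ∈ c.known, s ∈ ts.goal

/-- Applicability of decl-unsolvable: no goal state is known and
no transition leaves the known states. -/
def DeclUnsolvableApp (c : FConfig S I) : Prop :=
  (∀ s ∈ c.known, s ∉ ts.goal) ∧ ¬ GenUnknownApp ts c

end Framework

/-! ## dynA* (Algorithm 2) -/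

/-- An open-list entry: (state, g-entry, h-entry). -/
abbrev Entry (S : Type) := S × NNReal × ℝ≥0∞

/-- The f-value of an open-list entry. -/
noncomputable def fval {S : Type} (en : Entry S) : ℝ≥0∞ := (en.2.1 : ℝ≥0∞) + en.2.2

/-- A configuration of dynA*: known states, closed set, open queue, the parent
information (g-values and parent pointers, i.e. the information of σ_p) and the
information object of the heuristic's source σ_h. -/
structure AConfig (S L I : Type) where
  known : Set S
  closed : Set S
  openq : Multiset (Entry S)
  par : S → Option (NNReal × Option (Tran S L))
  info : I

/-- The g-value currently stored for a state. -/
noncomputable def gOf {S L I : Type} (c : AConfig S L I) (s : S) : NNReal :=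
  ((c.par s).map Prod.fst).getD 0

section DynAStar

variable {S L I : Type} (ts : TransSys S L) (σh : InfoSource ts I) (h : S → I → ℝ≥0∞)

/-- Updating the parent information along a transition `t` (the update of the
progression-based parent source σ_p): the target's pair becomes
`(g(origin)+cost, t)` unless the previously stored g-value is smaller. -/
noncomputable def parUpd (par : S → Option (NNReal × Option (Tran S L))) (t : Tran S L) :
    S → Option (NNReal × Option (Tran S L)) := fun x =>
  if x = t.2.2 then
    match par t.1 with
    | none => par t.2.2
    | some (g, _) =>
      match par t.2.2 with
      | none => some (g + ts.cost t.2.1, some t)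
      | some (g', p') =>
          if g + ts.cost t.2.1 ≤ g' then some (g + ts.cost t.2.1, some t)
          else some (g', p')
  else par x

/-- Processing one successor transition `t = (s, ℓ, s')` during the expansion of
`s`: record the old g-value (undefined iff `s'` unknown), update both information
objects along `t`, add `s'` to the known states, and insert `(s', g(s'), h(s'))`
into the open queue if `h(s') < ∞` and `s'` is new or reached more cheaply
(removing `s'` from closed in the latter case: reopening). -/
noncomputable def procSucc (c : AConfig S L I) (t : Tran S L) : AConfig S L I :=
  let oldg : Option NNReal := if t.2.2 ∈ c.known then some (gOf c t.2.2) else none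
  let par' := parUpd ts c.par t
  let info' := σh.update c.info t
  let c' : AConfig S L I :=
    { known := insert t.2.2 c.known, closed := c.closed, openq := c.openq,
      par := par', info := info' }
  let gnew : NNReal := ((par' t.2.2).map Prod.fst).getD 0
  let hnew : ℝ≥0∞ := h t.2.2 info'
  if hnew = ⊤ then c'
  else
    match oldg with
    | none => { c' with openq := (t.2.2, gnew, hnew) ::ₘ c.openq }
    | some go =>
      if gnew < go then
        { c' with closed := c.closed \ {t.2.2},
                  openq := (t.2.2, gnew, hnew) ::ₘ c.openq }
      else c'

/-- Expanding a state: process all its successor transitions in order. -/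
noncomputable def expandAll (c : AConfig S L I) (l : List (Tran S L)) : AConfig S L I :=
  l.foldl (procSucc ts σh h) c

/-- `l` enumerates (without repetition) exactly the transitions with origin `s`. -/
def SuccList (s : S) (l : List (Tran S L)) : Prop :=
  l.Nodup ∧ ∀ t : Tran S L, t ∈ l ↔ t ∈ ts.trans ∧ t.1 = s

/-- Labels recording what happened in one iteration of dynA*. -/
inductive ALab (S L : Type) where
  | dup (en : Entry S)
  | reev (en : Entry S)
  | expand (en : Entry S)
  | retGoal (en : Entry S) (π : List (Tran S L))
  | unsolv

/-- The entry popped from the open queue in an iteration, if any. -/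
def popped {S L : Type} : ALab S L → Option (Entry S)
  | .dup en => some en
  | .reev en => some en
  | .expand en => some en
  | .retGoal en _ => some en
  | .unsolv => none

/-- The outcome of one iteration of dynA*. -/
inductive AOut (S L I : Type) where
  | cont (c : AConfig S L I)
  | retPath (π : List (Tran S L))
  | unsolvable

/-- One iteration of dynA* (Algorithm 2), with optional re-evaluation.
An entry of minimal f-value is popped; duplicates (closed states) are discarded;
otherwise both information objects are refined on the popped state (σ_p's refine
is the identity, so `par` is unchanged); with `reeval` set, a state whose
heuristic value increased is re-inserted instead of expanded; expanding a goal
state returns the path obtained by following parent pointers; expanding a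
non-goal state processes all its successor transitions. If the open queue is
empty, 'unsolvable' is returned. -/
inductive AStep (reeval : Bool) : AConfig S L I → ALab S L → AOut S L I → Prop
  | dup {c : AConfig S L I} {en : Entry S} {rest : Multiset (Entry S)} :
      c.openq = en ::ₘ rest → (∀ en' ∈ c.openq, fval en ≤ fval en') →
      en.1 ∈ c.closed →
      AStep reeval c (.dup en) (.cont { c with openq := rest })
  | reevFin {c : AConfig S L I} {en : Entry S} {rest : Multiset (Entry S)} :
      c.openq = en ::ₘ rest → (∀ en' ∈ c.openq, fval en ≤ fval en') →
      en.1 ∉ c.closed → reeval = true →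
      en.2.2 < h en.1 (σh.refine c.info en.1) →
      h en.1 (σh.refine c.info en.1) ≠ ⊤ →
      AStep reeval c (.reev en)
        (.cont { c with info := σh.refine c.info en.1,
                        openq := (en.1, gOf c en.1, h en.1 (σh.refine c.info en.1)) ::ₘ rest })
  | reevInf {c : AConfig S L I} {en : Entry S} {rest : Multiset (Entry S)} :
      c.openq = en ::ₘ rest → (∀ en' ∈ c.openq, fval en ≤ fval en') →
      en.1 ∉ c.closed → reeval = true →
      en.2.2 < h en.1 (σh.refine c.info en.1) →
      h en.1 (σh.refine c.info en.1) = ⊤ →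
      AStep reeval c (.reev en)
        (.cont { c with info := σh.refine c.info en.1, openq := rest })
  | retGoal {c : AConfig S L I} {en : Entry S} {rest : Multiset (Entry S)}
      {π : List (Tran S L)} :
      c.openq = en ::ₘ rest → (∀ en' ∈ c.openq, fval en ≤ fval en') →
      en.1 ∉ c.closed →
      ¬(reeval = true ∧ en.2.2 < h en.1 (σh.refine c.info en.1)) →
      en.1 ∈ ts.goal → ParentChain c.par en.1 π →
      AStep reeval c (.retGoal en π) (.retPath π)
  | expand {c : AConfig S L I} {en : Entry S} {rest : Multiset (Entry S)}
      {l : List (Tran S L)} :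
      c.openq = en ::ₘ rest → (∀ en' ∈ c.openq, fval en ≤ fval en') →
      en.1 ∉ c.closed →
      ¬(reeval = true ∧ en.2.2 < h en.1 (σh.refine c.info en.1)) →
      en.1 ∉ ts.goal → SuccList ts en.1 l →
      AStep reeval c (.expand en)
        (.cont (expandAll ts σh h
          { c with openq := rest, closed := insert en.1 c.closed,
                   info := σh.refine c.info en.1 } l))
  | unsolv {c : AConfig S L I} :
      c.openq = 0 → AStep reeval c .unsolv .unsolvable

/-- The initial configuration of dynA*. -/
noncomputable def initAConfig : AConfig S L I where
  known := {ts.init}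
  closed := ∅
  openq :=
    if h ts.init σh.initInfo = ⊤ then 0 else {(ts.init, 0, h ts.init σh.initInfo)}
  par := fun x => if x = ts.init then some (0, none) else none
  info := σh.initInfo

/-- `IsExec ts σh h reeval e lab N`: `e 0, …, e N` are the configurations at the
beginnings of the iterations of an execution of dynA*, with `lab n` recording what
happened in iteration `n`. -/
def IsExec (reeval : Bool) (e : ℕ → AConfig S L I) (lab : ℕ → ALab S L) (N : ℕ) : Prop :=
  e 0 = initAConfig ts σh h ∧
  ∀ n < N, AStep ts σh h reeval (e n) (lab n) (.cont (e (n + 1)))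

/-- A state `s` is settled at iteration `n` if it was expanded in some earlier
iteration at whose beginning its stored g-value was `g*(s)`. -/
def SettledAt (e : ℕ → AConfig S L I) (lab : ℕ → ALab S L) (n : ℕ) (s : S) : Prop :=
  ∃ m < n, ∃ en : Entry S, lab m = .expand en ∧ en.1 = s ∧
    (gOf (e m) s : ℝ≥0∞) = ts.gstar s

/-- Iterated refinement of an information object on a fixed state. -/
def refIter (i : I) (s : S) : ℕ → I
  | 0 => i
  | n + 1 => σh.refine (refIter i s n) s

end DynAStar


/-! ## Auxiliary invariant for the proof of Statement 13 -/

section InvProof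

variable {S L I : Type} (ts : TransSys S L) (σh : InfoSource ts I) (h : S → I → ℝ≥0∞)

/-- The invariant maintained by dynA* configurations. -/
def AInv (c : AConfig S L I) : Prop :=
  (∀ s : S, (c.par s).isSome ↔ s ∈ c.known) ∧
  (∀ en ∈ c.openq, en.1 ∈ c.known) ∧
  σh.ReachWith c.info c.known ∧
  (∀ en ∈ c.openq, en.1 ∉ c.closed →
    ∃ en' ∈ c.openq, en'.1 = en.1 ∧
      fval en' ≤ (gOf c en.1 : ℝ≥0∞) + h en.1 c.info)

variable {ts σh h}

lemma aInv_init : AInv ts σh h (initAConfig ts σh h) := by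
  refine ⟨?_, ?_, ?_, ?_⟩
  · intro s
    simp only [initAConfig]
    by_cases hs : s = ts.init <;> simp [hs]
  · intro en hen
    simp only [initAConfig] at hen ⊢
    split at hen
    · simp at hen
    · rw [Multiset.mem_singleton] at hen
      subst hen
      exact Set.mem_singleton _
  · exact InfoSource.ReachWith.base
  · intro en hen _
    refine ⟨en, hen, rfl, ?_⟩
    simp only [initAConfig] at hen ⊢
    split at hen
    · simp at hen
    · rw [Multiset.mem_singleton] at hen
      subst hen
      simp [fval, gOf]

lemma procSucc_top {c : AConfig S L I} {t : Tran S L}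
    (htop : h t.2.2 (σh.update c.info t) = ⊤) :
    procSucc ts σh h c t =
      ⟨insert t.2.2 c.known, c.closed, c.openq, parUpd ts c.par t, σh.update c.info t⟩ := by
  simp only [procSucc, if_pos htop]

lemma procSucc_new {c : AConfig S L I} {t : Tran S L}
    (htop : ¬ h t.2.2 (σh.update c.info t) = ⊤) (hk : t.2.2 ∉ c.known) :
    procSucc ts σh h c t =
      ⟨insert t.2.2 c.known, c.closed,
        (t.2.2, ((parUpd ts c.par t t.2.2).map Prod.fst).getD 0,
          h t.2.2 (σh.update c.info t)) ::ₘ c.openq,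
        parUpd ts c.par t, σh.update c.info t⟩ := by
  simp only [procSucc, if_neg htop, if_neg hk]

lemma procSucc_reopen {c : AConfig S L I} {t : Tran S L}
    (htop : ¬ h t.2.2 (σh.update c.info t) = ⊤) (hk : t.2.2 ∈ c.known)
    (hlt : ((parUpd ts c.par t t.2.2).map Prod.fst).getD 0 < gOf c t.2.2) :
    procSucc ts σh h c t =
      ⟨insert t.2.2 c.known, c.closed \ {t.2.2},
        (t.2.2, ((parUpd ts c.par t t.2.2).map Prod.fst).getD 0,
          h t.2.2 (σh.update c.info t)) ::ₘ c.openq,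
        parUpd ts c.par t, σh.update c.info t⟩ := by
  simp only [procSucc, if_neg htop, if_pos hk, if_pos hlt]

lemma procSucc_old {c : AConfig S L I} {t : Tran S L}
    (htop : ¬ h t.2.2 (σh.update c.info t) = ⊤) (hk : t.2.2 ∈ c.known)
    (hlt : ¬ ((parUpd ts c.par t t.2.2).map Prod.fst).getD 0 < gOf c t.2.2) :
    procSucc ts σh h c t =
      ⟨insert t.2.2 c.known, c.closed, c.openq, parUpd ts c.par t, σh.update c.info t⟩ := by
  simp only [procSucc, if_neg htop, if_pos hk, if_neg hlt]

lemma aInv_procSucc (hmono : DynMonotonic ts σh h) {c : AConfig S L I} {t : Tran S L}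
    (ht : t ∈ ts.trans) (ht1 : t.1 ∈ c.known) (hc : AInv ts σh h c) :
    AInv ts σh h (procSucc ts σh h c t) := by
  obtain ⟨hA, hB, hD, hC⟩ := hc
  have hreach : σh.ReachableInfo c.info := ⟨c.known, hD⟩
  have hup : ∀ s : S, h s c.info ≤ h s (σh.update c.info t) :=
    fun s => (hmono _ hreach).1 s t ht
  obtain ⟨⟨g1, p1⟩, hg1⟩ := Option.isSome_iff_exists.mp ((hA t.1).2 ht1)
  have hD' : σh.ReachWith (σh.update c.info t) (insert t.2.2 c.known) :=
    hD.update ht ht1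
  have hne : ∀ x, x ≠ t.2.2 → parUpd ts c.par t x = c.par x := fun x hx => if_neg hx
  by_cases hk : t.2.2 ∈ c.known
  · -- t.2.2 already known
    obtain ⟨⟨g0, p0⟩, hg0⟩ := Option.isSome_iff_exists.mp ((hA t.2.2).2 hk)
    have hg0' : gOf c t.2.2 = g0 := by simp [gOf, hg0]; rfl
    have hps : parUpd ts c.par t t.2.2 =
        if g1 + ts.cost t.2.1 ≤ g0 then some (g1 + ts.cost t.2.1, some t)
        else some (g0, p0) := by
      simp [parUpd, hg1, hg0]
    have hgnew_le : ((parUpd ts c.par t t.2.2).map Prod.fst).getD 0 ≤ g0 := by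
      rw [hps]; split_ifs with hif
      · exact hif
      · exact le_of_eq rfl
    have hsome' : (parUpd ts c.par t t.2.2).isSome := by
      rw [hps]; split_ifs <;> simp
    by_cases htop : h t.2.2 (σh.update c.info t) = ⊤
    · rw [procSucc_top htop]
      refine ⟨?_, ?_, hD', ?_⟩
      · intro s
        by_cases hs : s = t.2.2
        · subst hs; simp [hsome']
        · simp only [hne s hs, Set.mem_insert_iff]
          rw [hA s]; simp [hs]
      · intro en2 h2; exact Set.mem_insert_of_mem _ (hB en2 h2)
      · intro en2 h2 hcl
        by_cases hs : en2.1 = t.2.2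
        · refine ⟨en2, h2, rfl, ?_⟩
          rw [hs]
          show fval en2 ≤ _ + h t.2.2 (σh.update c.info t)
          rw [htop, add_top]; exact le_top
        · obtain ⟨en', hm, hst', hle⟩ := hC en2 h2 hcl
          refine ⟨en', hm, hst', hle.trans ?_⟩
          have : gOf (⟨insert t.2.2 c.known, c.closed, c.openq, parUpd ts c.par t,
              σh.update c.info t⟩ : AConfig S L I) en2.1 = gOf c en2.1 := by
            simp [gOf, hne en2.1 hs]
          rw [this]
          exact add_le_add (le_refl _) (hup en2.1)
    · by_cases hlt : ((parUpd ts c.par t t.2.2).map Prod.fst).getD 0 < gOf c t.2.2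
      · -- reopen
        rw [procSucc_reopen htop hk hlt]
        refine ⟨?_, ?_, hD', ?_⟩
        · intro s
          by_cases hs : s = t.2.2
          · subst hs; simp [hsome']
          · simp only [hne s hs, Set.mem_insert_iff]
            rw [hA s]; simp [hs]
        · intro en2 h2
          rcases Multiset.mem_cons.mp h2 with h2 | h2
          · subst h2; exact Set.mem_insert _ _
          · exact Set.mem_insert_of_mem _ (hB en2 h2)
        · intro en2 h2 hcl
          by_cases hs : en2.1 = t.2.2
          · refine ⟨_, Multiset.mem_cons_self _ _, hs.symm, ?_⟩
            rw [hs]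
            simp [fval, gOf]
          · have h2' : en2 ∈ c.openq := by
              rcases Multiset.mem_cons.mp h2 with h2 | h2
              · exact absurd (by rw [h2]) hs
              · exact h2
            have hcl' : en2.1 ∉ c.closed := fun hx => hcl ⟨hx, hs⟩
            obtain ⟨en', hm, hst', hle⟩ := hC en2 h2' hcl'
            refine ⟨en', Multiset.mem_cons_of_mem hm, hst', hle.trans ?_⟩
            have : gOf (⟨insert t.2.2 c.known, c.closed \ {t.2.2},
                (t.2.2, ((parUpd ts c.par t t.2.2).map Prod.fst).getD 0,
                  h t.2.2 (σh.update c.info t)) ::ₘ c.openq,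
                parUpd ts c.par t, σh.update c.info t⟩ : AConfig S L I) en2.1
                = gOf c en2.1 := by
              simp [gOf, hne en2.1 hs]
            rw [this]
            exact add_le_add (le_refl _) (hup en2.1)
      · -- no reopen
        rw [procSucc_old htop hk hlt]
        have hgeq : ((parUpd ts c.par t t.2.2).map Prod.fst).getD 0 = gOf c t.2.2 := by
          rw [hg0']; exact le_antisymm hgnew_le (by rw [← hg0']; exact not_lt.mp hlt)
        have hgall : ∀ u, gOf (⟨insert t.2.2 c.known, c.closed, c.openq,
            parUpd ts c.par t, σh.update c.info t⟩ : AConfig S L I) u = gOf c u := by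
          intro u
          by_cases hu : u = t.2.2
          · subst hu; exact hgeq
          · simp [gOf, hne u hu]
        refine ⟨?_, ?_, hD', ?_⟩
        · intro s
          by_cases hs : s = t.2.2
          · subst hs; simp [hsome']
          · simp only [hne s hs, Set.mem_insert_iff]
            rw [hA s]; simp [hs]
        · intro en2 h2; exact Set.mem_insert_of_mem _ (hB en2 h2)
        · intro en2 h2 hcl
          obtain ⟨en', hm, hst', hle⟩ := hC en2 h2 hcl
          refine ⟨en', hm, hst', hle.trans ?_⟩
          rw [hgall]
          exact add_le_add (le_refl _) (hup en2.1)
  · -- t.2.2 unknown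
    have hnone : c.par t.2.2 = none :=
      Option.not_isSome_iff_eq_none.mp (fun hs => hk ((hA t.2.2).1 hs))
    have hps : parUpd ts c.par t t.2.2 = some (g1 + ts.cost t.2.1, some t) := by
      simp [parUpd, hg1, hnone]
    have hsome' : (parUpd ts c.par t t.2.2).isSome := by rw [hps]; simp
    by_cases htop : h t.2.2 (σh.update c.info t) = ⊤
    · rw [procSucc_top htop]
      refine ⟨?_, ?_, hD', ?_⟩
      · intro s
        by_cases hs : s = t.2.2
        · subst hs; simp [hsome']
        · simp only [hne s hs, Set.mem_insert_iff]
          rw [hA s]; simp [hs]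
      · intro en2 h2; exact Set.mem_insert_of_mem _ (hB en2 h2)
      · intro en2 h2 hcl
        by_cases hs : en2.1 = t.2.2
        · refine ⟨en2, h2, rfl, ?_⟩
          rw [hs]
          show fval en2 ≤ _ + h t.2.2 (σh.update c.info t)
          rw [htop, add_top]; exact le_top
        · obtain ⟨en', hm, hst', hle⟩ := hC en2 h2 hcl
          refine ⟨en', hm, hst', hle.trans ?_⟩
          have : gOf (⟨insert t.2.2 c.known, c.closed, c.openq, parUpd ts c.par t,
              σh.update c.info t⟩ : AConfig S L I) en2.1 = gOf c en2.1 := by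
            simp [gOf, hne en2.1 hs]
          rw [this]
          exact add_le_add (le_refl _) (hup en2.1)
    · rw [procSucc_new htop hk]
      refine ⟨?_, ?_, hD', ?_⟩
      · intro s
        by_cases hs : s = t.2.2
        · subst hs; simp [hsome']
        · simp only [hne s hs, Set.mem_insert_iff]
          rw [hA s]; simp [hs]
      · intro en2 h2
        rcases Multiset.mem_cons.mp h2 with h2 | h2
        · subst h2; exact Set.mem_insert _ _
        · exact Set.mem_insert_of_mem _ (hB en2 h2)
      · intro en2 h2 hcl
        by_cases hs : en2.1 = t.2.2
        · refine ⟨_, Multiset.mem_cons_self _ _, hs.symm, ?_⟩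
          rw [hs]
          simp [fval, gOf]
        · have h2' : en2 ∈ c.openq := by
            rcases Multiset.mem_cons.mp h2 with h2 | h2
            · exact absurd (by rw [h2]) hs
            · exact h2
          obtain ⟨en', hm, hst', hle⟩ := hC en2 h2' hcl
          refine ⟨en', Multiset.mem_cons_of_mem hm, hst', hle.trans ?_⟩
          have : gOf (⟨insert t.2.2 c.known, c.closed,
              (t.2.2, ((parUpd ts c.par t t.2.2).map Prod.fst).getD 0,
                h t.2.2 (σh.update c.info t)) ::ₘ c.openq,
              parUpd ts c.par t, σh.update c.info t⟩ : AConfig S L I) en2.1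
              = gOf c en2.1 := by
            simp [gOf, hne en2.1 hs]
          rw [this]
          exact add_le_add (le_refl _) (hup en2.1)

lemma procSucc_known {c : AConfig S L I} {t : Tran S L} :
    (procSucc ts σh h c t).known = insert t.2.2 c.known := by
  by_cases htop : h t.2.2 (σh.update c.info t) = ⊤
  · rw [procSucc_top htop]
  · by_cases hk : t.2.2 ∈ c.known
    · by_cases hlt : ((parUpd ts c.par t t.2.2).map Prod.fst).getD 0 < gOf c t.2.2
      · rw [procSucc_reopen htop hk hlt]
      · rw [procSucc_old htop hk hlt]
    · rw [procSucc_new htop hk]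

lemma aInv_expandAll (hmono : DynMonotonic ts σh h) {s0 : S} :
    ∀ (l : List (Tran S L)) (c : AConfig S L I), AInv ts σh h c → s0 ∈ c.known →
      (∀ t ∈ l, t ∈ ts.trans ∧ t.1 = s0) → AInv ts σh h (expandAll ts σh h c l)
  | [], c, hc, _, _ => hc
  | t :: l, c, hc, hs0, hl => by
    have ht := hl t List.mem_cons_self
    have h1 : AInv ts σh h (procSucc ts σh h c t) :=
      aInv_procSucc hmono ht.1 (by rw [ht.2]; exact hs0) hc
    have h2 : s0 ∈ (procSucc ts σh h c t).known := by
      rw [procSucc_known]; exact Set.mem_insert_of_mem _ hs0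
    have h3 := aInv_expandAll hmono l (procSucc ts σh h c t) h1 h2
      (fun t' ht' => hl t' (List.mem_cons_of_mem _ ht'))
    simpa [expandAll] using h3

lemma aInv_step (hmono : DynMonotonic ts σh h) {reeval : Bool} {c : AConfig S L I}
    {l : ALab S L} {c' : AConfig S L I}
    (hst : AStep ts σh h reeval c l (.cont c')) (hc : AInv ts σh h c) :
    AInv ts σh h c' := by
  obtain ⟨hA, hB, hD, hC⟩ := hc
  have hreach : σh.ReachableInfo c.info := ⟨c.known, hD⟩
  cases hst with
  | dup hop hmin hcl =>
    rename_i en rest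
    refine ⟨hA, ?_, hD, ?_⟩
    · intro en2 h2
      exact hB en2 (by rw [hop]; exact Multiset.mem_cons_of_mem h2)
    · intro en2 h2 hcl2
      obtain ⟨en', hm, hst', hle⟩ :=
        hC en2 (by rw [hop]; exact Multiset.mem_cons_of_mem h2) hcl2
      have hm' : en' ∈ rest := by
        rcases Multiset.mem_cons.mp (by rw [← hop]; exact hm) with hq | hq
        · subst hq; exact absurd (hst' ▸ hcl) hcl2
        · exact hq
      exact ⟨en', hm', hst', hle⟩
  | reevFin hop hmin hncl hre hlt hfin =>
    rename_i en rest
    have henk : en.1 ∈ c.known := hB en (by rw [hop]; exact Multiset.mem_cons_self _ _)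
    have href : ∀ s : S, h s c.info ≤ h s (σh.refine c.info en.1) :=
      fun s => (hmono _ hreach).2 s en.1
    refine ⟨hA, ?_, hD.refine henk, ?_⟩
    · intro en2 h2
      rcases Multiset.mem_cons.mp h2 with h2 | h2
      · subst h2; exact henk
      · exact hB en2 (by rw [hop]; exact Multiset.mem_cons_of_mem h2)
    · intro en2 h2 hcl2
      by_cases hs : en2.1 = en.1
      · refine ⟨_, Multiset.mem_cons_self _ _, hs.symm, ?_⟩
        rw [hs]
        simp [fval, gOf]
      · have h2' : en2 ∈ rest := by
          rcases Multiset.mem_cons.mp h2 with h2 | h2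
          · exact absurd (by rw [h2]) hs
          · exact h2
        obtain ⟨en', hm, hst', hle⟩ :=
          hC en2 (by rw [hop]; exact Multiset.mem_cons_of_mem h2') hcl2
        have hm' : en' ∈ rest := by
          rcases Multiset.mem_cons.mp (by rw [← hop]; exact hm) with hq | hq
          · subst hq; exact absurd hst'.symm hs
          · exact hq
        refine ⟨en', Multiset.mem_cons_of_mem hm', hst', hle.trans ?_⟩
        exact add_le_add (le_refl _) (href en2.1)
  | reevInf hop hmin hncl hre hlt hinf =>
    rename_i en rest
    have henk : en.1 ∈ c.known := hB en (by rw [hop]; exact Multiset.mem_cons_self _ _)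
    have href : ∀ s : S, h s c.info ≤ h s (σh.refine c.info en.1) :=
      fun s => (hmono _ hreach).2 s en.1
    refine ⟨hA, ?_, hD.refine henk, ?_⟩
    · intro en2 h2
      exact hB en2 (by rw [hop]; exact Multiset.mem_cons_of_mem h2)
    · intro en2 h2 hcl2
      by_cases hs : en2.1 = en.1
      · refine ⟨en2, h2, rfl, ?_⟩
        rw [hs]
        show fval en2 ≤ _ + h en.1 (σh.refine c.info en.1)
        rw [hinf, add_top]; exact le_top
      · obtain ⟨en', hm, hst', hle⟩ :=
          hC en2 (by rw [hop]; exact Multiset.mem_cons_of_mem h2) hcl2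
        have hm' : en' ∈ rest := by
          rcases Multiset.mem_cons.mp (by rw [← hop]; exact hm) with hq | hq
          · subst hq; exact absurd hst'.symm hs
          · exact hq
        refine ⟨en', hm', hst', hle.trans ?_⟩
        exact add_le_add (le_refl _) (href en2.1)
  | expand hop hmin hncl hnre hng hsucc =>
    rename_i en rest lsucc
    have henk : en.1 ∈ c.known := hB en (by rw [hop]; exact Multiset.mem_cons_self _ _)
    have href : ∀ s : S, h s c.info ≤ h s (σh.refine c.info en.1) :=
      fun s => (hmono _ hreach).2 s en.1
    have hc1 : AInv ts σh h
        { c with openq := rest, closed := insert en.1 c.closed,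
                 info := σh.refine c.info en.1 } := by
      refine ⟨hA, ?_, hD.refine henk, ?_⟩
      · intro en2 h2
        exact hB en2 (by rw [hop]; exact Multiset.mem_cons_of_mem h2)
      · intro en2 h2 hcl2
        have hs : en2.1 ≠ en.1 := fun hx => hcl2 (by rw [hx]; exact Set.mem_insert _ _)
        have hcl' : en2.1 ∉ c.closed := fun hx => hcl2 (Set.mem_insert_of_mem _ hx)
        obtain ⟨en', hm, hst', hle⟩ :=
          hC en2 (by rw [hop]; exact Multiset.mem_cons_of_mem h2) hcl'
        have hm' : en' ∈ rest := by
          rcases Multiset.mem_cons.mp (by rw [← hop]; exact hm) with hq | hq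
          · subst hq; exact absurd hst'.symm hs
          · exact hq
        refine ⟨en', hm', hst', hle.trans ?_⟩
        exact add_le_add (le_refl _) (href en2.1)
    exact aInv_expandAll hmono lsucc _ hc1 henk
      (fun t' ht' => (hsucc.2 t').mp ht')

lemma aInv_exec (hmono : DynMonotonic ts σh h) {reeval : Bool} {e : ℕ → AConfig S L I}
    {lab : ℕ → ALab S L} {N : ℕ} (hex : IsExec ts σh h reeval e lab N) :
    ∀ n ≤ N, AInv ts σh h (e n) := by
  intro n
  induction n with
  | zero => intro _; rw [hex.1]; exact aInv_init
  | succ k ih =>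
    intro hk
    exact aInv_step hmono (hex.2 k (Nat.lt_of_succ_le hk))
      (ih (Nat.le_of_succ_le hk))

end InvProof

/-! ## Statement 13 -/


theorem stmt13 {S L I : Type} [Fintype S] [Fintype L]
    (ts : TransSys S L) (σh : InfoSource ts I) (h : S → I → ℝ≥0∞)
    (hmono : DynMonotonic ts σh h) (reeval : Bool)
    (e : ℕ → AConfig S L I) (lab : ℕ → ALab S L) (N : ℕ)
    (hexec : IsExec ts σh h reeval e lab N)
    (n : ℕ) (hn : n ≤ N) (l : ALab S L) (o : AOut S L I)
    (hstep : AStep ts σh h reeval (e n) l o)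
    (en : Entry S) (hpop : popped l = some en)
    (hnotclosed : en.1 ∉ (e n).closed) :
    fval en ≤ (gOf (e n) en.1 : ℝ≥0∞) + h en.1 (e n).info := by
  obtain ⟨hA, hB, hD, hC⟩ := aInv_exec hmono hexec n hn
  have key : ∀ rest : Multiset (Entry S), (e n).openq = en ::ₘ rest →
      (∀ en' ∈ (e n).openq, fval en ≤ fval en') →
      fval en ≤ (gOf (e n) en.1 : ℝ≥0∞) + h en.1 (e n).info := by
    intro rest hop hmin
    have hm : en ∈ (e n).openq := by rw [hop]; exact Multiset.mem_cons_self _ _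
    obtain ⟨en', hm', _, hle⟩ := hC en hm hnotclosed
    exact (hmin en' hm').trans hle
  cases hstep with
  | dup hop hmin _ =>
    obtain rfl := Option.some.inj hpop
    exact key _ hop hmin
  | reevFin hop hmin _ _ _ _ =>
    obtain rfl := Option.some.inj hpop
    exact key _ hop hmin
  | reevInf hop hmin _ _ _ _ =>
    obtain rfl := Option.some.inj hpop
    exact key _ hop hmin
  | retGoal hop hmin _ _ _ _ =>
    obtain rfl := Option.some.inj hpop
    exact key _ hop hmin
  | expand hop hmin _ _ _ _ =>
    obtain rfl := Option.some.inj hpop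
    exact key _ hop hmin
  | unsolv _ => simp [popped] at hpop
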